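/- There exist constants 0 < c₁ ≤ c₂ depending only on c and θ such that for every x ≥ 2 and every t in the open interval (g(Δ₁), g(Δ₂)), the derivative of the inverse function satisfies c₁·t^{γ−1} ≤ m′(t) ≤ c₂·t^{γ−1}. -/

import Mathlib

open Real

/-- `Δ₁ = exp(π·⌊(log x)/π⌋ + arctan 1)` -/
noncomputable def Δ₁ (x : ℝ) : ℝ :=
  Real.exp (Real.pi * (⌊Real.log x / Real.pi⌋ : ℝ) + Real.arctan 1)

/-- `Δ₂ = exp(π·⌊(log x)/π⌋ + arctan 2)` -/
noncomputable def Δ₂ (x : ℝ) : ℝ :=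
  Real.exp (Real.pi * (⌊Real.log x / Real.pi⌋ : ℝ) + Real.arctan 2)

/-- `g(y) = y^c · (tan(log y))^θ` (real powers). -/
noncomputable def g (c θ y : ℝ) : ℝ := y ^ c * Real.tan (Real.log y) ^ θ

/-!
On the window `[Δ₁, Δ₂]` the quantity `T = tan (log y)` stays in `[1, 2]`, so
`g' y = y ^ (c - 1) · F(T)` with `F(T) = c T ^ θ + θ T ^ (θ - 1) (1 + T ^ 2)` bounded above and
below by constants. By the inverse function rule `m' t = 1 / g'(m t)`, and since
`t = y ^ c T ^ θ` we have `y ^ (c - 1) = t ^ (1 - 1/c) · (T ^ θ) ^ (1/c - 1)`, where again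
`T ^ θ ∈ [1, 2 ^ θ]`.
-/

open Set

theorem HasDerivAt.of_rightInvOn_of_strictMonoOn {f m : ℝ → ℝ} {a b t D : ℝ}
    (hf : StrictMonoOn f (Icc a b))
    (hm : ∀ s ∈ Icc (f a) (f b), m s ∈ Icc a b ∧ f (m s) = s)
    (ht : t ∈ Ioo (f a) (f b)) (hD : HasDerivAt f D (m t)) (hD0 : D ≠ 0) :
    HasDerivAt m D⁻¹ t := by
  obtain ⟨⟨hat, htb⟩, hfmt⟩ := hm t (Ioo_subset_Icc_self ht)
  have hab : a ≤ b := hat.trans htb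
  have hmono : StrictMonoOn m (Icc (f a) (f b)) := by
    intro s₁ h₁ s₂ h₂ hs
    by_contra! hle
    have := hf.monotoneOn (hm s₂ h₂).1 (hm s₁ h₁).1 hle
    rw [(hm s₁ h₁).2, (hm s₂ h₂).2] at this
    exact hs.not_ge this
  have hsurj : Icc a b ⊆ m '' Icc (f a) (f b) := fun z hz => by
    have hfz : f z ∈ Icc (f a) (f b) :=
      ⟨hf.monotoneOn (left_mem_Icc.2 hab) hz hz.1, hf.monotoneOn hz (right_mem_Icc.2 hab) hz.2⟩
    exact ⟨f z, hfz, hf.injOn (hm _ hfz).1 hz (hm _ hfz).2⟩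
  have hmt : m t ∈ Ioo a b :=
    ⟨hat.lt_of_ne fun h => ht.1.ne (h ▸ hfmt), htb.lt_of_ne fun h => ht.2.ne' (h ▸ hfmt)⟩
  have hnhds : Icc (f a) (f b) ∈ nhds t := Icc_mem_nhds ht.1 ht.2
  have hcont : ContinuousAt m t := hmono.continuousAt_of_image_mem_nhds hnhds
    (Filter.mem_of_superset (Icc_mem_nhds hmt.1 hmt.2) hsurj)
  exact hD.of_local_left_inverse hcont hD0
    (Filter.eventually_of_mem hnhds fun s hs => (hm s hs).2)

section Window

variable {x y : ℝ}

theorem log_sub_floor_mul_pi_mem_Icc (hy : y ∈ Icc (Δ₁ x) (Δ₂ x)) :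
    log y - ⌊log x / π⌋ * π ∈ Icc (arctan 1) (arctan 2) := by
  have h₁ : log (Δ₁ x) ≤ log y := log_le_log (exp_pos _) hy.1
  have h₂ : log y ≤ log (Δ₂ x) := log_le_log ((exp_pos _).trans_le hy.1) hy.2
  rw [Δ₁, log_exp] at h₁
  rw [Δ₂, log_exp] at h₂
  constructor <;> linarith

theorem Icc_arctan_one_two_subset : Icc (arctan 1) (arctan 2) ⊆ Ioo (-(π / 2)) (π / 2) :=
  Icc_subset_Ioo (arctan_mem_Ioo 1).1 (arctan_lt_pi_div_two 2)

theorem pos_of_mem_Icc_Δ (hy : y ∈ Icc (Δ₁ x) (Δ₂ x)) : 0 < y :=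
  (exp_pos _).trans_le hy.1

theorem monotoneOn_tan_log : MonotoneOn (fun y => tan (log y)) (Icc (Δ₁ x) (Δ₂ x)) := by
  intro y₁ h₁ y₂ h₂ h
  simp only [← tan_periodic.sub_int_mul_eq (x := log _) ⌊log x / π⌋]
  exact strictMonoOn_tan.monotoneOn
    (Icc_arctan_one_two_subset (log_sub_floor_mul_pi_mem_Icc h₁))
    (Icc_arctan_one_two_subset (log_sub_floor_mul_pi_mem_Icc h₂))
    (by linarith [log_le_log (pos_of_mem_Icc_Δ h₁) h])

theorem tan_log_mem_Icc (hy : y ∈ Icc (Δ₁ x) (Δ₂ x)) : tan (log y) ∈ Icc 1 2 := by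
  have hs := log_sub_floor_mul_pi_mem_Icc hy
  rw [← tan_periodic.sub_int_mul_eq ⌊log x / π⌋]
  have hs' := Icc_arctan_one_two_subset hs
  constructor
  · simpa only [tan_arctan] using strictMonoOn_tan.monotoneOn (arctan_mem_Ioo 1) hs' hs.1
  · simpa only [tan_arctan] using strictMonoOn_tan.monotoneOn hs' (arctan_mem_Ioo 2) hs.2

theorem strictMonoOn_g {c θ : ℝ} (hc : 0 < c) (hθ : 0 ≤ θ) :
    StrictMonoOn (g c θ) (Icc (Δ₁ x) (Δ₂ x)) := by
  intro y₁ h₁ y₂ h₂ h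
  have hT₁ := (tan_log_mem_Icc h₁).1
  exact mul_lt_mul (rpow_lt_rpow (pos_of_mem_Icc_Δ h₁).le h hc)
    (rpow_le_rpow (by linarith) (monotoneOn_tan_log h₁ h₂ h.le) hθ)
    (rpow_pos_of_pos (by linarith) θ) (rpow_pos_of_pos (pos_of_mem_Icc_Δ h₂) c).le

end Window

noncomputable def gDerivFactor (c θ T : ℝ) : ℝ := c * T ^ θ + θ * T ^ (θ - 1) * (1 + T ^ 2)

theorem hasDerivAt_g {c θ y : ℝ} (hy : 0 < y) (hT : tan (log y) ≠ 0) :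
    HasDerivAt (g c θ) (y ^ (c - 1) * gDerivFactor c θ (tan (log y))) y := by
  have hcos : cos (log y) ≠ 0 := fun h => hT (by rw [tan_eq_sin_div_cos, h, div_zero])
  have htan : HasDerivAt (fun z => tan (log z)) (1 / cos (log y) ^ 2 * y⁻¹) y :=
    (hasDerivAt_tan hcos).comp y (hasDerivAt_log hy.ne')
  have hsec : 1 / cos (log y) ^ 2 = 1 + tan (log y) ^ 2 := by
    rw [one_div, ← inv_one_add_tan_sq hcos, inv_inv]
  have hyc : y ^ c = y ^ (c - 1) * y := by
    rw [rpow_sub hy, rpow_one]; field_simp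
  refine ((hasDerivAt_rpow_const (p := c) (Or.inl hy.ne')).mul
    (htan.rpow_const (p := θ) (Or.inl hT))).congr_deriv ?_
  rw [hsec, hyc, gDerivFactor]
  field_simp

theorem gDerivFactor_mem_Icc {c θ T : ℝ} (hc : 0 ≤ c) (hθ : 1 ≤ θ) (hT : T ∈ Icc 1 2) :
    gDerivFactor c θ T ∈ Icc c ((c + 5 * θ) * 2 ^ θ) := by
  obtain ⟨hT₁, hT₂⟩ := hT
  have hTθ : T ^ θ ≤ 2 ^ θ := rpow_le_rpow (by linarith) hT₂ (by linarith)
  have hTθ₁ : T ^ (θ - 1) ≤ 2 ^ θ :=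
    (rpow_le_rpow (by linarith) hT₂ (by linarith)).trans
      (rpow_le_rpow_of_exponent_le one_le_two (by linarith))
  have hsq : 1 + T ^ 2 ≤ 5 := by nlinarith
  have hpos : 0 ≤ θ * T ^ (θ - 1) * (1 + T ^ 2) := by positivity
  simp only [gDerivFactor]
  constructor
  · nlinarith [one_le_rpow hT₁ (by linarith : 0 ≤ θ)]
  · have : T ^ (θ - 1) * (1 + T ^ 2) ≤ 2 ^ θ * 5 :=
      mul_le_mul hTθ₁ hsq (by positivity) (by positivity)
    nlinarith [mul_le_mul_of_nonneg_left hTθ hc,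
      mul_le_mul_of_nonneg_left this (by linarith : 0 ≤ θ)]

/-- Rewrites `1 / g'(y)` in terms of `t = g(y) = y ^ c * u`, where `u = tan (log y) ^ θ`. -/
theorem inv_rpow_sub_one_mul_eq {c y u : ℝ} (hc : c ≠ 0) (hy : 0 < y) (hu : 0 < u) (F : ℝ) :
    (y ^ (c - 1) * F)⁻¹ = (y ^ c * u) ^ (1 / c - 1) * (u ^ (1 - 1 / c) / F) := by
  rw [mul_rpow (rpow_nonneg hy.le _) hu.le, ← rpow_mul hy.le,
    show c * (1 / c - 1) = -(c - 1) by field_simp; ring, rpow_neg hy.le,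
    show (1 / c - 1 : ℝ) = -(1 - 1 / c) by ring, rpow_neg hu.le]
  field_simp [(rpow_pos_of_pos hu (1 - 1 / c)).ne']

theorem rpow_div_gDerivFactor_mem_Icc {c θ T : ℝ} (hc : 1 < c) (hθ : 1 ≤ θ)
    (hT : T ∈ Icc 1 2) :
    (T ^ θ) ^ (1 - 1 / c) / gDerivFactor c θ T ∈ Icc ((c + 5 * θ) * 2 ^ θ)⁻¹ (2 ^ θ / c) := by
  obtain ⟨hF₁, hF₂⟩ := gDerivFactor_mem_Icc (c := c) (by linarith) hθ hT
  have hFpos : 0 < gDerivFactor c θ T := by linarith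
  have he : 1 / c < 1 := (div_lt_one (by linarith)).2 hc
  have hTθ : 1 ≤ T ^ θ := one_le_rpow hT.1 (by linarith)
  have hu₁ : 1 ≤ (T ^ θ) ^ (1 - 1 / c) := one_le_rpow hTθ (by linarith)
  have hu₂ : (T ^ θ) ^ (1 - 1 / c) ≤ 2 ^ θ :=
    (rpow_le_self_of_one_le hTθ (by linarith [one_div_pos.2 (by linarith : (0 : ℝ) < c)])).trans
      (rpow_le_rpow (by linarith [hT.1]) hT.2 (by linarith))
  constructor
  · rw [inv_eq_one_div]
    exact div_le_div₀ (by linarith) hu₁ hFpos hF₂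
  · exact div_le_div₀ (by positivity) hu₂ (by linarith) hF₁

theorem stmt_4_general (c θ : ℝ) (hc₁ : 1 < c) (hθ : 1 < θ)
    (m : ℝ → ℝ → ℝ)
    (hm : ∀ x : ℝ, 2 ≤ x → ∀ t ∈ Set.Icc (g c θ (Δ₁ x)) (g c θ (Δ₂ x)),
      m x t ∈ Set.Icc (Δ₁ x) (Δ₂ x) ∧ g c θ (m x t) = t) :
    ∃ c₁ c₂ : ℝ, 0 < c₁ ∧ c₁ ≤ c₂ ∧
      ∀ x : ℝ, 2 ≤ x → ∀ t ∈ Set.Ioo (g c θ (Δ₁ x)) (g c θ (Δ₂ x)),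
        c₁ * t ^ (1 / c - 1) ≤ deriv (m x) t ∧ deriv (m x) t ≤ c₂ * t ^ (1 / c - 1) := by
  have hc₀ : 0 < c := by linarith
  have hbounds := fun T (hT : T ∈ Icc 1 2) => rpow_div_gDerivFactor_mem_Icc hc₁ hθ.le hT
  refine ⟨((c + 5 * θ) * 2 ^ θ)⁻¹, 2 ^ θ / c, by positivity,
    (hbounds 1 ⟨le_rfl, one_le_two⟩).1.trans (hbounds 1 ⟨le_rfl, one_le_two⟩).2, ?_⟩
  intro x hx t ht
  obtain ⟨hy, hgy⟩ := hm x hx t (Ioo_subset_Icc_self ht)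
  rw [g] at hgy
  have hT := tan_log_mem_Icc hy
  have hT₀ : 0 < tan (log (m x t)) := by linarith [hT.1]
  have hy₀ := pos_of_mem_Icc_Δ hy
  have hD₀ : 0 < m x t ^ (c - 1) * gDerivFactor c θ (tan (log (m x t))) :=
    mul_pos (rpow_pos_of_pos hy₀ _) (by linarith [(gDerivFactor_mem_Icc hc₀.le hθ.le hT).1])
  have hderiv := HasDerivAt.of_rightInvOn_of_strictMonoOn (strictMonoOn_g hc₀ (by linarith))
    (hm x hx) ht (hasDerivAt_g hy₀ hT₀.ne') hD₀.ne'
  rw [hderiv.deriv, inv_rpow_sub_one_mul_eq hc₀.ne' hy₀ (rpow_pos_of_pos hT₀ θ), hgy,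
    mul_comm _ (t ^ _), mul_comm _ (t ^ _)]
  have ht₀ : 0 ≤ t ^ (1 / c - 1) :=
    rpow_nonneg (hgy ▸ mul_nonneg (rpow_nonneg hy₀.le _) (rpow_nonneg hT₀.le _)) _
  exact ⟨mul_le_mul_of_nonneg_left (hbounds _ hT).1 ht₀,
    mul_le_mul_of_nonneg_left (hbounds _ hT).2 ht₀⟩

theorem stmt_4 (c θ : ℝ) (hc₁ : 1 < c) (hc₂ : c < 12 / 11) (hθ : 1 < θ)
    (m : ℝ → ℝ → ℝ)
    (hm : ∀ x : ℝ, 2 ≤ x → ∀ t ∈ Set.Icc (g c θ (Δ₁ x)) (g c θ (Δ₂ x)),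
      m x t ∈ Set.Icc (Δ₁ x) (Δ₂ x) ∧ g c θ (m x t) = t) :
    ∃ c₁ c₂ : ℝ, 0 < c₁ ∧ c₁ ≤ c₂ ∧
      ∀ x : ℝ, 2 ≤ x → ∀ t ∈ Set.Ioo (g c θ (Δ₁ x)) (g c θ (Δ₂ x)),
        c₁ * t ^ (1 / c - 1) ≤ deriv (m x) t ∧ deriv (m x) t ≤ c₂ * t ^ (1 / c - 1) :=
  stmt_4_general c θ hc₁ hθ m hm
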